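/- Identity: for every growing letter c and every k ≥ 1, LB(σᵏ(c)) = ⊔_{j=0}^{k−1} σ^{k−1−j}(LB(σ(LC(σʲ(c))))), where the concatenation is taken left to right. -/

import Mathlib

open List
open scoped Classical

namespace SubstPaper

variable {A : Type*}

/-- Apply a substitution letterwise to a word. -/
def applyW (σ : A → List A) (u : List A) : List A := u.flatMap σ

/-- `n`-th iterate of a substitution on a word. -/
def iterW (σ : A → List A) (n : ℕ) (u : List A) : List A := (applyW σ)^[n] u

/-- Non-erasing substitution. -/
def NonErasing (σ : A → List A) : Prop := ∀ a, σ a ≠ []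

/-- A letter is bounded if the lengths of its iterated images stay bounded. -/
def IsBounded (σ : A → List A) (a : A) : Prop := ∃ K, ∀ n, (iterW σ n [a]).length ≤ K

/-- A letter is growing if it is not bounded. -/
def IsGrowing (σ : A → List A) (a : A) : Prop := ¬ IsBounded σ a

/-- The prefix of `u` consisting of bounded letters, before the first growing letter. -/
noncomputable def LBw (σ : A → List A) (u : List A) : List A :=
  u.takeWhile (fun a => decide (IsBounded σ a))

/-- The first growing letter of `u` (junk value if none). -/
noncomputable def LCw [Inhabited A] (σ : A → List A) (u : List A) : A :=
  (u.dropWhile (fun a => decide (IsBounded σ a))).headI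

/-- The bounded suffix of `u`, after the last growing letter. -/
noncomputable def RBw (σ : A → List A) (u : List A) : List A :=
  (LBw σ u.reverse).reverse

/-- The last growing letter of `u` (junk value if none). -/
noncomputable def RCw [Inhabited A] (σ : A → List A) (u : List A) : A :=
  LCw σ u.reverse

/-- Growing letters occurring in a word. -/
def alphC (σ : A → List A) (u : List A) : Set A := {c | IsGrowing σ c ∧ c ∈ u}

/-- The map on alphabets induced by the substitution: `D ↦ ⋃_{a ∈ D} alph_C(σ(a))`. -/
def FAlph (σ : A → List A) (D : Set A) : Set A := ⋃ a ∈ D, alphC σ (σ a)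

/-- `D` is a `k`-periodic alphabet: nonempty set of growing letters, `k` least positive
with `F^[k] D = D`. -/
def IsKPeriodicAlph (σ : A → List A) (D : Set A) (k : ℕ) : Prop :=
  D.Nonempty ∧ (∀ a ∈ D, IsGrowing σ a) ∧ 0 < k ∧ (FAlph σ)^[k] D = D ∧
    ∀ j, 0 < j → (FAlph σ)^[j] D = D → k ≤ j

/-- `D` is a minimal alphabet: periodic with no proper nonempty periodic subalphabet. -/
def IsMinimalAlph (σ : A → List A) (D : Set A) : Prop :=
  (∃ k, IsKPeriodicAlph σ D k) ∧
    ∀ D' ⊆ D, D'.Nonempty → (∃ k', IsKPeriodicAlph σ D' k') → D' = D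

/-- The finite word `u` occurs in the bi-infinite word `x`. -/
def OccursIn (x : ℤ → A) (u : List A) : Prop :=
  ∃ i : ℤ, ∀ j : Fin u.length, x (i + j.1) = u.get j

/-- The substitution subshift `X_σ`. -/
def Xsub (σ : A → List A) : Set (ℤ → A) :=
  {x | ∀ u, OccursIn x u → ∃ a n, u <:+: iterW σ n [a]}

/-- The left shift on bi-infinite words. -/
def shiftT (x : ℤ → A) : ℤ → A := fun i => x (i + 1)

/-- A subshift: nonempty, closed, shift-invariant. -/
def IsSubshift [TopologicalSpace A] (X : Set (ℤ → A)) : Prop :=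
  X.Nonempty ∧ IsClosed X ∧ shiftT '' X = X

/-- A minimal subshift: contains no proper subshift. -/
def IsMinimalSubshift [TopologicalSpace A] (X : Set (ℤ → A)) : Prop :=
  IsSubshift X ∧ ∀ Y ⊆ X, IsSubshift Y → Y = X

/-- The periodic bi-infinite word `ωuω`. -/
noncomputable def perWord [Inhabited A] (u : List A) : ℤ → A :=
  fun i => u.getD ((i % (u.length : ℤ)).toNat) default

/-- The shift-orbit closure `X(x)` of a bi-infinite word. -/
def orbitClosure [TopologicalSpace A] (x : ℤ → A) : Set (ℤ → A) :=
  closure {y | ∃ k : ℤ, ∀ i, y i = x (i + k)}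

/-- `x` is the letterwise image of `y` under `σ`, with the origin at the image of
position `0`. -/
def IsSubstImage (σ : A → List A) (y x : ℤ → A) : Prop :=
  ∃ c : ℤ → ℤ, c 0 = 0 ∧ (∀ i, c (i + 1) = c i + (σ (y i)).length) ∧
    ∀ i : ℤ, ∀ j : Fin (σ (y i)).length, x (c i + j.1) = (σ (y i)).get j

/-- The induced map `σ̃` on subshifts: all shifts of images of elements of `X`. -/
def tildeS (σ : A → List A) (X : Set (ℤ → A)) : Set (ℤ → A) :=
  {z | ∃ x ∈ X, ∃ k : ℤ, IsSubstImage σ x (fun i => z (i + k))}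

/-- Growing letters occurring in some element of `X`. -/
def alphCX (σ : A → List A) (X : Set (ℤ → A)) : Set A :=
  {c | IsGrowing σ c ∧ ∃ x ∈ X, ∃ i : ℤ, x i = c}

/-- The subshift of the restriction `σᵏ|_E` (words whose factors occur in some
`σ^{kn}(a)`, `a ∈ E`). -/
def Xrestr (σ : A → List A) (E : Set A) (k : ℕ) : Set (ℤ → A) :=
  {x | ∀ u, OccursIn x u → ∃ a ∈ E, ∃ n, u <:+: iterW σ (k * n) [a]}

/-- A growing letter `c` is left-isolated: `σⁿ(c) = u c v` with `u` nonempty bounded. -/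
def LeftIsolated (σ : A → List A) (c : A) : Prop :=
  IsGrowing σ c ∧ ∃ n, 1 ≤ n ∧ ∃ u v : List A, u ≠ [] ∧ (∀ b ∈ u, IsBounded σ b) ∧
    iterW σ n [c] = u ++ c :: v

/-- A growing letter `c` is right-isolated: `σⁿ(c) = v c u` with `u` nonempty bounded. -/
def RightIsolated (σ : A → List A) (c : A) : Prop :=
  IsGrowing σ c ∧ ∃ n, 1 ≤ n ∧ ∃ u v : List A, u ≠ [] ∧ (∀ b ∈ u, IsBounded σ b) ∧
    iterW σ n [c] = v ++ c :: u

/-- Growing letter that is neither left- nor right-isolated (member of `C_niso`). -/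
def NonIsolated (σ : A → List A) (c : A) : Prop :=
  IsGrowing σ c ∧ ¬ LeftIsolated σ c ∧ ¬ RightIsolated σ c

/-- A periodic letter: bounded, and occurring in some `σⁿ(a)`, `n ≥ 1`. -/
def IsPeriodicLetter (σ : A → List A) (a : A) : Prop :=
  IsBounded σ a ∧ ∃ n, 1 ≤ n ∧ [a] <:+: iterW σ n [a]

/-- `(a,u,b)` is a 1-block of the word `w`. -/
def Is1Block (σ : A → List A) (w : List A) (t : A × List A × A) : Prop :=
  IsGrowing σ t.1 ∧ IsGrowing σ t.2.2 ∧ (∀ x ∈ t.2.1, IsBounded σ x) ∧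
    (t.1 :: (t.2.1 ++ [t.2.2])) <:+: w

/-- The descendant map on 1-blocks. -/
noncomputable def Desc [Inhabited A] (σ : A → List A) : A × List A × A → A × List A × A :=
  fun t => (RCw σ (σ t.1), RBw σ (σ t.1) ++ applyW σ t.2.1 ++ LBw σ (σ t.2.2), LCw σ (σ t.2.2))

/-- The bi-infinite word `ωu.wvω`. -/
noncomputable def biWord [Inhabited A] (u w v : List A) : ℤ → A := fun i =>
  if i < 0 then u.getD ((i % (u.length : ℤ)).toNat) default
  else if i < (w.length : ℤ) then w.getD i.toNat default
  else v.getD (((i - (w.length : ℤ)) % (v.length : ℤ)).toNat) default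


section Aux
variable {A : Type*}

lemma applyW_append (σ : A → List A) (u v : List A) :
    applyW σ (u ++ v) = applyW σ u ++ applyW σ v := List.flatMap_append

lemma iterW_append (σ : A → List A) (n : ℕ) (u v : List A) :
    iterW σ n (u ++ v) = iterW σ n u ++ iterW σ n v := by
  induction n generalizing u v with
  | zero => simp [iterW]
  | succ n ih =>
    simp only [iterW, Function.iterate_succ_apply] at *
    rw [applyW_append, ih]

lemma iterW_succ' (σ : A → List A) (n : ℕ) (u : List A) :
    iterW σ (n + 1) u = iterW σ n (applyW σ u) := by
  simp [iterW, Function.iterate_succ_apply]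

lemma iterW_succ (σ : A → List A) (n : ℕ) (u : List A) :
    iterW σ (n + 1) u = applyW σ (iterW σ n u) := by
  simp [iterW, Function.iterate_succ_apply']

lemma iterW_nil (σ : A → List A) (n : ℕ) : iterW σ n ([] : List A) = [] := by
  induction n with
  | zero => rfl
  | succ n ih => rw [iterW_succ, ih]; rfl

lemma bounded_of_mem {σ : A → List A} {a b : A} (ha : IsBounded σ a) (hb : b ∈ σ a) :
    IsBounded σ b := by
  obtain ⟨K, hK⟩ := ha
  refine ⟨K, fun n => ?_⟩
  obtain ⟨l1, l2, hl⟩ := List.append_of_mem hb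
  have h1 : iterW σ (n + 1) [a] = iterW σ n (σ a) := by
    rw [iterW_succ']; simp [applyW]
  have h2 : iterW σ n (σ a) = iterW σ n l1 ++ iterW σ n [b] ++ iterW σ n l2 := by
    rw [hl]
    have : l1 ++ b :: l2 = l1 ++ [b] ++ l2 := by simp
    rw [this, iterW_append, iterW_append]
  have := hK (n + 1)
  rw [h1, h2] at this
  simp only [List.length_append] at this
  omega

lemma exists_growing_mem [Fintype A] {σ : A → List A} {c : A} (hc : IsGrowing σ c) :
    ∃ b ∈ σ c, IsGrowing σ b := by
  by_contra h
  push_neg at h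
  apply hc
  classical
  set K : A → ℕ := fun b => if hb : IsBounded σ b then hb.choose else 0 with hKdef
  have hKb : ∀ b ∈ σ c, ∀ n, (iterW σ n [b]).length ≤ K b := by
    intro b hb n
    have hbb : IsBounded σ b := not_not.mp (h b hb)
    simp only [hKdef, dif_pos hbb]
    exact hbb.choose_spec n
  refine ⟨max 1 (((σ c).map K).sum), fun n => ?_⟩
  cases n with
  | zero => simp [iterW]
  | succ n =>
    have h1 : iterW σ (n + 1) [c] = iterW σ n (σ c) := by
      rw [iterW_succ']; simp [applyW]
    have h2 : ∀ u : List A, (∀ b ∈ u, b ∈ σ c) →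
        (iterW σ n u).length ≤ ((u.map K).sum) := by
      intro u
      induction u with
      | nil => simp [iterW_nil]
      | cons x xs ih =>
        intro hu
        have : iterW σ n (x :: xs) = iterW σ n [x] ++ iterW σ n xs := by
          have : (x :: xs) = [x] ++ xs := rfl
          rw [this, iterW_append]
        rw [this]
        simp only [List.length_append, List.map_cons, List.sum_cons]
        have := hKb x (hu x (by simp)) n
        have := ih (fun b hb => hu b (by simp [hb]))
        omega
    rw [h1]
    exact le_trans (h2 (σ c) (fun b hb => hb)) (le_max_right _ _)

lemma exists_growing_iter [Fintype A] {σ : A → List A} {c : A} (hc : IsGrowing σ c) (k : ℕ) :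
    ∃ b ∈ iterW σ k [c], IsGrowing σ b := by
  induction k with
  | zero => exact ⟨c, by simp [iterW], hc⟩
  | succ k ih =>
    obtain ⟨d, hd, hdg⟩ := ih
    obtain ⟨b, hb, hbg⟩ := exists_growing_mem hdg
    refine ⟨b, ?_, hbg⟩
    rw [iterW_succ]
    simp only [applyW, List.mem_flatMap]
    exact ⟨d, hd, hb⟩

lemma takeWhile_append_all {p : A → Bool} {x : List A} (y : List A)
    (h : ∀ a ∈ x, p a = true) :
    List.takeWhile p (x ++ y) = x ++ List.takeWhile p y := by
  induction x with
  | nil => simp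
  | cons a t ih =>
    have hpa := h a (by simp)
    simp only [List.cons_append, List.takeWhile_cons, hpa, cond_true]
    rw [ih (fun b hb => h b (by simp [hb]))]
    simp

lemma takeWhile_append_of_exists {p : A → Bool} {x : List A} (y : List A)
    (h : ∃ a ∈ x, p a = false) :
    List.takeWhile p (x ++ y) = List.takeWhile p x := by
  induction x with
  | nil => simp at h
  | cons a t ih =>
    obtain ⟨b, hb, hpb⟩ := h
    by_cases hpa : p a
    · simp only [List.cons_append, List.takeWhile_cons, hpa]
      have hbt : b ∈ t := by
        rcases List.mem_cons.mp hb with rfl | h'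
        · rw [hpa] at hpb; cases hpb
        · exact h'
      rw [ih ⟨b, hbt, hpb⟩]
    · simp only [List.cons_append, List.takeWhile_cons]
      rw [Bool.not_eq_true] at hpa
      simp [hpa]

open scoped Classical in
lemma key_step [Fintype A] [Inhabited A] (σ : A → List A) (u : List A)
    (hu : ∃ b ∈ u, IsGrowing σ b) :
    LBw σ (applyW σ u) = applyW σ (LBw σ u) ++ LBw σ (σ (LCw σ u)) := by
  classical
  set p : A → Bool := fun a => decide (IsBounded σ a) with hp
  have hdrop : u.dropWhile p ≠ [] := by
    intro hnil
    obtain ⟨b, hb, hbg⟩ := hu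
    have : b ∈ u.takeWhile p := by
      have : u.takeWhile p ++ u.dropWhile p = u := List.takeWhile_append_dropWhile
      rw [hnil, List.append_nil] at this
      rw [this]; exact hb
    have := List.mem_takeWhile_imp this
    simp only [hp, decide_eq_true_eq] at this
    exact hbg this
  obtain ⟨d, t, hdt⟩ := List.exists_cons_of_ne_nil hdrop
  have hdLC : LCw σ u = d := by show (u.dropWhile p).headI = d; rw [hdt]; rfl
  have hdg : IsGrowing σ d := by
    have h1 := List.head_dropWhile_not p hdrop
    have h2 := List.head?_eq_head hdrop
    have h3 : (dropWhile p u).head? = some d := by rw [hdt]; rfl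
    rw [h2] at h3
    have h4 : (dropWhile p u).head hdrop = d := Option.some.inj h3
    rw [h4] at h1
    simpa [hp, IsGrowing] using h1
  have hsplit : u = u.takeWhile p ++ (d :: t) := by
    rw [← hdt]
    exact (List.takeWhile_append_dropWhile : u.takeWhile p ++ u.dropWhile p = u).symm
  have happ : applyW σ u = applyW σ (u.takeWhile p) ++ (σ d ++ applyW σ t) := by
    conv_lhs => rw [hsplit]
    rw [applyW_append]
    rfl
  have hall : ∀ a ∈ applyW σ (u.takeWhile p), p a = true := by
    intro a ha
    simp only [applyW, List.mem_flatMap] at ha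
    obtain ⟨b, hb, hab⟩ := ha
    have hbB : IsBounded σ b := by
      have := List.mem_takeWhile_imp hb
      simpa [hp] using this
    simp only [hp, decide_eq_true_eq]
    exact bounded_of_mem hbB hab
  have h1 : LBw σ (applyW σ u)
      = applyW σ (u.takeWhile p) ++ List.takeWhile p (σ d ++ applyW σ t) := by
    rw [LBw, happ, takeWhile_append_all _ hall]
  have hgd : ∃ a ∈ σ d, p a = false := by
    obtain ⟨b, hb, hbg⟩ := exists_growing_mem hdg
    exact ⟨b, hb, by simpa [hp, IsGrowing] using hbg⟩
  rw [h1, takeWhile_append_of_exists _ hgd, hdLC]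
  rfl

end Aux

/-- For every growing letter `c` and `k ≥ 1`,
`LB(σᵏ(c)) = ⊔_{j<k} σ^{k−1−j}(LB(σ(LC(σʲ(c)))))`. -/

theorem stmt17 [Fintype A] [Inhabited A] (σ : A → List A) (hσ : NonErasing σ)
    (c : A) (hc : IsGrowing σ c) (k : ℕ) (hk : 1 ≤ k) :
    LBw σ (iterW σ k [c]) =
      ((List.range k).map
        (fun j => iterW σ (k - 1 - j) (LBw σ (σ (LCw σ (iterW σ j [c])))))).flatten := by
  classical
  induction k with
  | zero => omega
  | succ k ih =>
    rcases Nat.eq_or_lt_of_le hk with h1 | h1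
    · -- k + 1 = 1
      have hk0 : k = 0 := by omega
      subst hk0
      have hLC : LCw σ (iterW σ 0 [c]) = c := by
        simp only [iterW, Function.iterate_zero, id_eq, LCw]
        rw [List.dropWhile_cons]
        have : ¬ (decide (IsBounded σ c) = true) := by simpa [IsGrowing] using hc
        simp only [this, if_false]
        rfl
      have hr1 : List.range 1 = [0] := rfl
      simp only [hr1, List.map_cons, List.map_nil, List.flatten,
        List.append_nil]
      rw [hLC]
      have : iterW σ 1 [c] = σ c := by simp [iterW, applyW]
      rw [this]
      simp [iterW]
    · have hk1 : 1 ≤ k := by omega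
      have IH := ih hk1
      have hiter : iterW σ (k + 1) [c] = applyW σ (iterW σ k [c]) := iterW_succ σ k [c]
      have hug : ∃ b ∈ iterW σ k [c], IsGrowing σ b := exists_growing_iter hc k
      rw [hiter, key_step σ _ hug, IH]
      have happf : ∀ L : List (List A),
          applyW σ L.flatten = (L.map (applyW σ)).flatten := by
        intro L
        induction L with
        | nil => simp [applyW]
        | cons x xs ihL => simp [applyW_append, ihL]
      rw [happf]
      rw [List.range_succ, List.map_append, List.flatten_append]
      congr 1
      · rw [List.map_map]
        congr 1
        apply List.map_congr_left
        intro j hj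
        simp only [List.mem_range] at hj
        simp only [Function.comp_apply]
        have harith : k + 1 - 1 - j = (k - 1 - j) + 1 := by omega
        rw [harith, iterW_succ]
      · simp [iterW]

end SubstPaper
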